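/- There is a bijection between the set of elementary $d$-ary forests with $m$ leaves and the set of $d$-matchings on the linear graph $L_{m-1}$, under which $d$-carets correspond to paths of length $d-1$. -/
import Mathlib


namespace Forests

/-- Number of leaves of an elementary `d`-ary forest, encoded as a list of
trees each of which is either trivial (`false`, one leaf) or a single
`d`-ary caret (`true`, `d` leaves). -/
def leafCount (d : ℕ) (l : List Bool) : ℕ :=
  (l.map fun t => if t then d else 1).sum

/-- Elementary `d`-ary forests with `m` leaves. -/
def ElemForest (d m : ℕ) := {l : List Bool // leafCount d l = m}

/-- The set of starting leaf-positions (1-indexed) of the carets of an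
elementary forest. -/
def starts (d : ℕ) : ℕ → List Bool → Finset ℕ
  | _, [] => ∅
  | pos, false :: l => starts d (pos + 1) l
  | pos, true :: l => insert pos (starts d (pos + d) l)

/-- `d`-matchings on the linear graph `L_{m-1}` with vertices `1, …, m`:
subgraphs all of whose connected components are paths of length `d - 1`,
encoded by the set of initial vertices of the paths.  Disjointness of the
paths is the condition `i + d ≤ j` for starting vertices `i < j`. -/
def DMatching (d m : ℕ) :=
  {S : Finset ℕ //
    (∀ i ∈ S, 1 ≤ i ∧ i + (d - 1) ≤ m) ∧
    (∀ i ∈ S, ∀ j ∈ S, i < j → i + d ≤ j)}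

lemma leafCount_nil (d : ℕ) : leafCount d [] = 0 := rfl

lemma leafCount_cons_false (d : ℕ) (l : List Bool) :
    leafCount d (false :: l) = 1 + leafCount d l := by simp [leafCount]

lemma leafCount_cons_true (d : ℕ) (l : List Bool) :
    leafCount d (true :: l) = d + leafCount d l := by simp [leafCount]

lemma starts_nil (d pos : ℕ) : starts d pos [] = ∅ := rfl

lemma starts_false (d pos : ℕ) (l : List Bool) :
    starts d pos (false :: l) = starts d (pos + 1) l := rfl

lemma starts_true (d pos : ℕ) (l : List Bool) :
    starts d pos (true :: l) = insert pos (starts d (pos + d) l) := rfl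

lemma starts_bounds (d : ℕ) (hd : 1 ≤ d) :
    ∀ (l : List Bool) (pos : ℕ), ∀ i ∈ starts d pos l,
      pos ≤ i ∧ i + d ≤ pos + leafCount d l := by
  intro l
  induction l with
  | nil => simp [starts_nil]
  | cons b t ih =>
    intro pos i hi
    cases b with
    | false =>
      rw [starts_false] at hi
      obtain ⟨h1, h2⟩ := ih (pos + 1) i hi
      rw [leafCount_cons_false]; omega
    | true =>
      rw [starts_true, Finset.mem_insert] at hi
      rw [leafCount_cons_true]
      rcases hi with rfl | hi
      · omega
      · obtain ⟨h1, h2⟩ := ih (pos + d) i hi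
        omega

lemma starts_spacing (d : ℕ) (hd : 1 ≤ d) :
    ∀ (l : List Bool) (pos : ℕ), ∀ i ∈ starts d pos l, ∀ j ∈ starts d pos l,
      i < j → i + d ≤ j := by
  intro l
  induction l with
  | nil => simp [starts_nil]
  | cons b t ih =>
    intro pos i hi j hj hij
    cases b with
    | false =>
      rw [starts_false] at hi hj
      exact ih (pos + 1) i hi j hj hij
    | true =>
      rw [starts_true, Finset.mem_insert] at hi hj
      rcases hi with rfl | hi
      · rcases hj with rfl | hj
        · omega
        · have := (starts_bounds d hd t (i + d) j hj).1
          omega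
      · rcases hj with rfl | hj
        · have := (starts_bounds d hd t (j + d) i hi).1
          omega
        · exact ih (pos + d) i hi j hj hij

lemma starts_inj (d : ℕ) (hd : 1 ≤ d) :
    ∀ (l1 l2 : List Bool) (pos : ℕ),
      leafCount d l1 = leafCount d l2 → starts d pos l1 = starts d pos l2 →
      l1 = l2 := by
  intro l1
  induction l1 with
  | nil =>
    intro l2 pos hc _
    cases l2 with
    | nil => rfl
    | cons b t =>
      rw [leafCount_nil] at hc
      cases b
      · rw [leafCount_cons_false] at hc; omega
      · rw [leafCount_cons_true] at hc; omega
  | cons b t ih =>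
    intro l2 pos hc hs
    cases l2 with
    | nil =>
      rw [leafCount_nil] at hc
      cases b
      · rw [leafCount_cons_false] at hc; omega
      · rw [leafCount_cons_true] at hc; omega
    | cons b2 t2 =>
      cases b with
      | false =>
        cases b2 with
        | false =>
          rw [starts_false, starts_false] at hs
          rw [leafCount_cons_false, leafCount_cons_false] at hc
          rw [ih t2 (pos + 1) (by omega) hs]
        | true =>
          exfalso
          rw [starts_false, starts_true] at hs
          have hpos : pos ∈ starts d (pos + 1) t := by
            rw [hs]; exact Finset.mem_insert_self _ _
          have := (starts_bounds d hd t (pos + 1) pos hpos).1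
          omega
      | true =>
        cases b2 with
        | false =>
          exfalso
          rw [starts_true, starts_false] at hs
          have hpos : pos ∈ starts d (pos + 1) t2 := by
            rw [← hs]; exact Finset.mem_insert_self _ _
          have := (starts_bounds d hd t2 (pos + 1) pos hpos).1
          omega
        | true =>
          rw [starts_true, starts_true] at hs
          rw [leafCount_cons_true, leafCount_cons_true] at hc
          have hn1 : pos ∉ starts d (pos + d) t := fun h => by
            have := (starts_bounds d hd t (pos + d) pos h).1; omega
          have hn2 : pos ∉ starts d (pos + d) t2 := fun h => by
            have := (starts_bounds d hd t2 (pos + d) pos h).1; omega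
          have hst : starts d (pos + d) t = starts d (pos + d) t2 := by
            have h' := congrArg (fun S => Finset.erase S pos) hs
            simpa [Finset.erase_insert hn1, Finset.erase_insert hn2] using h'
          rw [ih t2 (pos + d) (by omega) hst]

lemma starts_surj (d : ℕ) (hd : 2 ≤ d) :
    ∀ (m pos : ℕ) (S : Finset ℕ),
      (∀ i ∈ S, pos ≤ i ∧ i + d ≤ pos + m) →
      (∀ i ∈ S, ∀ j ∈ S, i < j → i + d ≤ j) →
      ∃ l, leafCount d l = m ∧ starts d pos l = S := by
  intro m
  induction m using Nat.strong_induction_on with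
  | _ m ih =>
    intro pos S hb hs
    rcases Nat.eq_zero_or_pos m with rfl | hm
    · have hS : S = ∅ := by
        ext i
        simp only [Finset.notMem_empty, iff_false]
        intro hi
        have := hb i hi; omega
      exact ⟨[], rfl, by rw [starts_nil, hS]⟩
    · by_cases hpos : pos ∈ S
      · have hmd : d ≤ m := by have := hb pos hpos; omega
        obtain ⟨l, hl1, hl2⟩ := ih (m - d) (by omega) (pos + d) (S.erase pos)
          (fun i hi => by
            have hiS := Finset.mem_of_mem_erase hi
            have hne := Finset.ne_of_mem_erase hi
            have h1 := hb i hiS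
            have h2 := hs pos hpos i hiS (by omega)
            omega)
          (fun i hi j hj => hs i (Finset.mem_of_mem_erase hi) j
            (Finset.mem_of_mem_erase hj))
        refine ⟨true :: l, ?_, ?_⟩
        · rw [leafCount_cons_true]; omega
        · rw [starts_true, hl2, Finset.insert_erase hpos]
      · obtain ⟨l, hl1, hl2⟩ := ih (m - 1) (by omega) (pos + 1) S
          (fun i hi => by
            have h1 := hb i hi
            have : pos ≠ i := fun h => hpos (h ▸ hi)
            omega)
          hs
        refine ⟨false :: l, ?_, ?_⟩
        · rw [leafCount_cons_false]; omega
        · rw [starts_false]; exact hl2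

/-- The forward map from elementary forests to `d`-matchings. -/
def toMatching (d m : ℕ) (hd : 2 ≤ d) (f : ElemForest d m) : DMatching d m :=
  ⟨starts d 1 f.val,
    fun i hi => by
      have h := starts_bounds d (by omega) f.val 1 i hi
      rw [f.property] at h
      omega,
    fun i hi j hj hij => starts_spacing d (by omega) f.val 1 i hi j hj hij⟩

/-- There is a bijection between elementary `d`-ary forests with `m` leaves and
`d`-matchings on `L_{m-1}`, under which `d`-carets correspond to paths of
length `d - 1`. -/
theorem statement_15 (d m : ℕ) (hd : 2 ≤ d) :
    ∃ e : ElemForest d m ≃ DMatching d m,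
      ∀ f : ElemForest d m, (e f).val = starts d 1 f.val := by
  have hbij : Function.Bijective (toMatching d m hd) := by
    constructor
    · intro f g hfg
      have hs : starts d 1 f.val = starts d 1 g.val :=
        congrArg Subtype.val hfg
      exact Subtype.ext (starts_inj d (by omega) f.val g.val 1
        (by rw [f.property, g.property]) hs)
    · rintro ⟨S, h1, h2⟩
      obtain ⟨l, hl1, hl2⟩ := starts_surj d hd m 1 S
        (fun i hi => by have := h1 i hi; omega) h2
      exact ⟨⟨l, hl1⟩, Subtype.ext hl2⟩
  exact ⟨Equiv.ofBijective _ hbij, fun f => rfl⟩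

end Forests
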